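/- arXiv:2010.04113 — 3 statements merged into one kernel-verified Lean document; each statement's English description precedes it below -/
import Mathlib

section
/- Fix an integer t ≥ 2 and positive integers r_1, ..., r_t. If n ≥ R(r_1K_2, ..., r_tK_2), then R̃(r_1K_2, ..., r_tK_2; n) ≥ 3(r_1 + r_2 + ... + r_t − t + 1) − n. Equivalently: there exists a Painter strategy such that, for every way Builder adaptively selects 3(r_1 + ... + r_t − t + 1) − n − 1 distinct edges of K_n, after all these edges are colored according to the Painter strategy there is no color i ∈ {1,...,t} for which the edges of color i contain r_i pairwise disjoint edges. -/
open Finset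

/-- Two edges of a complete graph (elements of `Sym2 (Fin n)`) are disjoint if they
share no vertex. -/
def EdgeDisjoint {n : ℕ} (e f : Sym2 (Fin n)) : Prop := ∀ v, v ∈ e → v ∉ f

/-- A finite set of elements of `Sym2 (Fin n)` is a matching if each element is a genuine
(non-loop) edge and the edges are pairwise disjoint. -/
def IsMatchingIn {n : ℕ} (M : Finset (Sym2 (Fin n))) : Prop :=
  (∀ e ∈ M, ¬ e.IsDiag) ∧ (M : Set (Sym2 (Fin n))).Pairwise EdgeDisjoint

/-- A history of the online Ramsey game on `K_n` with `t` colours: the list of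
edges played so far, each together with the colour Painter gave it. -/
abbrev GameHistory (n t : ℕ) := List (Sym2 (Fin n) × Fin t)

/-- A Builder strategy: given the history so far, select the next edge. -/
abbrev BuilderStrategy (n t : ℕ) := GameHistory n t → Sym2 (Fin n)

/-- A Painter strategy: given the history so far and the newly selected edge,
choose a colour for it. -/
abbrev PainterStrategy (n t : ℕ) := GameHistory n t → Sym2 (Fin n) → Fin t

/-- The history after `k` moves when Builder plays strategy `B` against Painter
strategy `P`. -/
def gamePlay {n t : ℕ} (B : BuilderStrategy n t) (P : PainterStrategy n t) :
    ℕ → GameHistory n t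
  | 0 => []
  | k + 1 =>
      let h := gamePlay B P k
      h ++ [(B h, P h (B h))]

/-- Builder plays legally for the first `k` moves against `P`: every selected edge
is a genuine (non-loop) edge not selected before. -/
def BuilderValid {n t : ℕ} (B : BuilderStrategy n t) (P : PainterStrategy n t)
    (k : ℕ) : Prop :=
  ∀ j < k, ¬ (B (gamePlay B P j)).IsDiag ∧
    B (gamePlay B P j) ∉ (gamePlay B P j).map Prod.fst

/-- The history `h` contains, for some colour `i`, a matching of `r i` edges all
coloured `i`. -/
def HistoryHasMatching (n t : ℕ) (r : Fin t → ℕ) (h : GameHistory n t) : Prop :=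
  ∃ i : Fin t, ∃ M : Finset (Sym2 (Fin n)),
    M.card = r i ∧ IsMatchingIn M ∧ ∀ e ∈ M, (e, i) ∈ h

/-- Builder can force, within `k` legal moves on `K_n` with `t` colours, some colour
`i` to contain a matching of `r i` edges, against every Painter strategy. -/
def BuilderWinsIn (n t : ℕ) (r : Fin t → ℕ) (k : ℕ) : Prop :=
  ∃ B : BuilderStrategy n t, (∀ P : PainterStrategy n t, BuilderValid B P k) ∧
    ∀ P : PainterStrategy n t, HistoryHasMatching n t r (gamePlay B P k)

/-- The restricted online Ramsey number `R̃(r₁K₂,…,r_tK₂; n)`: the least `k` such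
that Builder can force a win within `k` moves. -/
noncomputable def restrictedOnlineRamsey (n t : ℕ) (r : Fin t → ℕ) : ℕ :=
  sInf {k | BuilderWinsIn n t r k}

/-- A colouring `c` of (the edges of) `K_N` with `t` colours contains, for some colour
`i`, a matching of `r i` edges all coloured `i`. -/
def ColoringHasMatching (N t : ℕ) (r : Fin t → ℕ) (c : Sym2 (Fin N) → Fin t) : Prop :=
  ∃ i : Fin t, ∃ M : Finset (Sym2 (Fin N)),
    M.card = r i ∧ IsMatchingIn M ∧ ∀ e ∈ M, c e = i

/-- The classical Ramsey number `R(r₁K₂,…,r_tK₂)`: the least `N` such that every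
`t`-colouring of the edges of `K_N` contains, for some `i`, a matching of `r i`
edges in colour `i`. -/
noncomputable def matchingRamsey (t : ℕ) (r : Fin t → ℕ) : ℕ :=
  sInf {N | ∀ c : Sym2 (Fin N) → Fin t, ColoringHasMatching N t r c}

open scoped Classical

namespace RORLB

/-- Painter's internal state. -/
structure PSt (n t : ℕ) where
  X : Fin t → Finset (Fin n)
  pend : Fin t → Finset (Fin n × Fin n)

variable {n t : ℕ}

noncomputable def emin {n : ℕ} (e : Sym2 (Fin n)) (he : ¬ e.IsDiag) : Fin n := by
  refine (Finset.univ.filter (· ∈ e)).min' ?_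
  induction e using Sym2.inductionOn with
  | hf a b => exact ⟨a, by simp⟩

lemma emin_mem {n : ℕ} (e : Sym2 (Fin n)) (he : ¬ e.IsDiag) : emin e he ∈ e := by
  have := Finset.min'_mem (Finset.univ.filter (· ∈ e)) (by
    induction e using Sym2.inductionOn with
    | hf a b => exact ⟨a, by simp⟩)
  exact (Finset.mem_filter.mp this).2

/-- kill condition for a pending pair in colour `i` when the new edge is `s(a, w)`
with `a` the pending's centre. -/
def killCond (σ : PSt n t) (i : Fin t) (a w : Fin n) : Prop :=
  w ∉ σ.X i ∨ ((∃ p', (w, p') ∈ σ.pend i) ∧ a < w)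

def killP (σ : PSt n t) (i : Fin t) (u v : Fin n) (q : Fin n × Fin n) : Prop :=
  (q.1 = u ∧ killCond σ i u v) ∨ (q.1 = v ∧ killCond σ i v u)

/-- One step of Painter: returns the chosen colour and the new state. -/
noncomputable def stepF (r : Fin t → ℕ) (i₀ : Fin t) (σ : PSt n t) (e : Sym2 (Fin n)) :
    Fin t × PSt n t :=
  if hd : e.IsDiag then (i₀, σ) else
  let A := Finset.univ.filter (fun i => ∃ w ∈ σ.X i, w ∈ e)
  if hA : A.Nonempty then
    let i := A.min' hA
    have hi : ∃ w ∈ σ.X i, w ∈ e := by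
      have := A.min'_mem hA; rw [Finset.mem_filter] at this; exact this.2
    let U := (σ.X i).filter (· ∈ e)
    have hU : U.Nonempty := by
      obtain ⟨w, hw1, hw2⟩ := hi; exact ⟨w, Finset.mem_filter.mpr ⟨hw1, hw2⟩⟩
    let u := U.min' hU
    have hu : u ∈ e := (Finset.mem_filter.mp (U.min'_mem hU)).2
    let v := Sym2.Mem.other' hu
    (i, ⟨σ.X, Function.update σ.pend i ((σ.pend i).filter (fun q => ¬ killP σ i u v q))⟩)
  else
  let B := Finset.univ.filter (fun i => ∃ q ∈ σ.pend i, q.2 ∈ e)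
  if hB : B.Nonempty then
    let i := B.min' hB
    have hi : ∃ q ∈ σ.pend i, q.2 ∈ e := by
      have := B.min'_mem hB; rw [Finset.mem_filter] at this; exact this.2
    let Q := (σ.pend i).filter (fun q => q.2 ∈ e)
    have hQ : Q.Nonempty := by
      obtain ⟨q, hq1, hq2⟩ := hi; exact ⟨q, Finset.mem_filter.mpr ⟨hq1, hq2⟩⟩
    let q₀ := hQ.choose
    (i, ⟨Function.update σ.X i (insert q₀.2 ((σ.X i).erase q₀.1)),
         Function.update σ.pend i ((σ.pend i).erase q₀)⟩)
  else
  let R := Finset.univ.filter (fun i => (σ.X i).card + 2 ≤ r i)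
  if hR : R.Nonempty then
    let i := R.min' hR
    let u := emin e hd
    let v := Sym2.Mem.other' (emin_mem e hd)
    (i, ⟨Function.update σ.X i (insert u (σ.X i)),
         Function.update σ.pend i (insert (u, v) (σ.pend i))⟩)
  else (i₀, σ)

def Gm (h : GameHistory n t) (i : Fin t) (e : Sym2 (Fin n)) : Prop := (e, i) ∈ h

structure Inv (r : Fin t → ℕ) (σ : PSt n t) (h : GameHistory n t) : Prop where
  ndg : ∀ q ∈ h, ¬ (Prod.fst q).IsDiag
  cover : ∀ i e, Gm h i e → ∃ w ∈ σ.X i, w ∈ e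
  cX : ∀ i, ∀ q ∈ σ.pend i, q.1 ∈ σ.X i
  pX : ∀ i j, ∀ q ∈ σ.pend j, q.2 ∉ σ.X i
  Xdis : ∀ i j, i ≠ j → ∀ w ∈ σ.X i, w ∉ σ.X j
  pInj : ∀ i j q q', q ∈ σ.pend i → q' ∈ σ.pend j → q.2 = q'.2 → i = j ∧ q = q'
  cInj : ∀ i q q', q ∈ σ.pend i → q' ∈ σ.pend i → q.1 = q'.1 → q = q'
  star : ∀ i, ∀ q ∈ σ.pend i, ∀ w, Gm h i s(q.1, w) → w = q.2 ∨ w ∈ σ.X i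
  estar : ∀ i q q', q ∈ σ.pend i → q' ∈ σ.pend i → q ≠ q' → ¬ Gm h i s(q.1, q'.1)
  pedge : ∀ i, ∀ q ∈ σ.pend i, Gm h i s(q.1, q.2)
  caps : ∀ i, (σ.X i).card + 1 ≤ r i
  cnt : 2 * ∑ i, (σ.X i).card ≤ h.length + ∑ i, (σ.pend i).card

end RORLB

namespace RORLB
variable {n t : ℕ}

lemma sum_card_update {α : Type*} (f : Fin t → Finset α) (i : Fin t) (s : Finset α) :
    (∑ j, ((Function.update f i s) j).card) + (f i).card = (∑ j, (f j).card) + s.card := by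
  have hfun : (fun j => ((Function.update f i s) j).card)
      = Function.update (fun j => (f j).card) i s.card := by
    funext j
    simp [Function.update_apply]
    split <;> rfl
  have h1 : ∑ j, ((Function.update f i s) j).card
      = s.card + ∑ j ∈ Finset.univ.erase i, (f j).card := by
    rw [hfun]
    rw [Finset.sum_update_of_mem (Finset.mem_univ i)]
    congr 1
    apply Finset.sum_congr
    · rw [Finset.sdiff_singleton_eq_erase]
    · intros; rfl
  have h2 : ∑ j, (f j).card = (f i).card + ∑ j ∈ Finset.univ.erase i, (f j).card :=
    (Finset.add_sum_erase _ _ (Finset.mem_univ i)).symm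
  omega

lemma mem_of_eq {e : Sym2 (Fin n)} {u v x : Fin n} (hv : s(u,v) = e) (hx : x ∈ e) :
    x = u ∨ x = v := by
  rw [← hv] at hx; simpa using hx

lemma ne_of_ndiag {e : Sym2 (Fin n)} {u v : Fin n} (he : ¬ e.IsDiag) (hv : s(u,v) = e) :
    u ≠ v := by
  intro h; exact he (hv ▸ Sym2.mk_isDiag_iff.mpr h)

lemma Gm_append {h : GameHistory n t} {e : Sym2 (Fin n)} {i j : Fin t} {e' : Sym2 (Fin n)} :
    Gm (h ++ [(e, i)]) j e' ↔ Gm h j e' ∨ (e' = e ∧ j = i) := by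
  simp [Gm, List.mem_append, Prod.ext_iff]

/-- T1 state update. -/
noncomputable def t1step (σ : PSt n t) (i : Fin t) (u v : Fin n) : PSt n t :=
  ⟨σ.X, Function.update σ.pend i ((σ.pend i).filter (fun q => ¬ killP σ i u v q))⟩

lemma inv_t1 {r : Fin t → ℕ} {σ : PSt n t} {h : GameHistory n t} (hinv : Inv r σ h)
    {e : Sym2 (Fin n)} (he : ¬ e.IsDiag) (hnew : e ∉ h.map Prod.fst)
    {i : Fin t} {u v : Fin n} (hu : u ∈ σ.X i) (hue : u ∈ e) (hv : s(u,v) = e) :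
    Inv r (t1step σ i u v) (h ++ [(e, i)]) := by
  have huv : u ≠ v := ne_of_ndiag he hv
  set P' := (σ.pend i).filter (fun q => ¬ killP σ i u v q) with hP'
  have hsub : P' ⊆ σ.pend i := Finset.filter_subset _ _
  have hpend' : ∀ j, (t1step σ i u v).pend j = if j = i then P' else σ.pend j := by
    intro j; simp [t1step, Function.update_apply]; rfl
  have hpsub : ∀ j q, q ∈ (t1step σ i u v).pend j → q ∈ σ.pend j := by
    intro j q hq
    rw [hpend' j] at hq
    split at hq
    · next hj => subst hj; exact hsub hq
    · exact hq
  have hX : (t1step σ i u v).X = σ.X := rfl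
  constructor
  · -- ndg
    intro q hq
    rcases List.mem_append.mp hq with h1 | h2
    · exact hinv.ndg q h1
    · simp at h2; rw [h2]; exact he
  · -- cover
    intro j e' hGm
    rw [hX]
    rcases Gm_append.mp hGm with h1 | ⟨he', hj⟩
    · exact hinv.cover j e' h1
    · subst he'; subst hj; exact ⟨u, hu, hue⟩
  · -- cX
    intro j q hq; rw [hX]; exact hinv.cX j q (hpsub j q hq)
  · -- pX
    intro j j' q hq; rw [hX]; exact hinv.pX j j' q (hpsub j' q hq)
  · -- Xdis
    rw [hX]; exact hinv.Xdis
  · -- pInj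
    intro j j' q q' hq hq' hqq
    exact hinv.pInj j j' q q' (hpsub j q hq) (hpsub j' q' hq') hqq
  · -- cInj
    intro j q q' hq hq' hqq
    exact hinv.cInj j q q' (hpsub j q hq) (hpsub j q' hq') hqq
  · -- star
    intro j q hq w hGm
    rw [hX]
    rcases Gm_append.mp hGm with h1 | ⟨he', hj⟩
    · exact hinv.star j q (hpsub j q hq) w h1
    · rw [hpend' j, if_pos hj] at hq
      subst hj
      rcases (Sym2.eq_iff).mp (he'.trans hv.symm) with ⟨hq1, hw⟩ | ⟨hq1, hw⟩
      · -- q.1 = u, w = v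
        right
        have := (Finset.mem_filter.mp hq).2
        rw [killP] at this
        push_neg at this
        have h2 := this.1 hq1
        rw [killCond] at h2
        push_neg at h2
        rw [hw]; exact h2.1
      · -- q.1 = v, w = u
        right; rw [hw]; exact hu
  · -- estar
    intro j q q' hq hq' hne hGm
    rcases Gm_append.mp hGm with h1 | ⟨he', hj⟩
    · exact hinv.estar j q q' (hpsub j q hq) (hpsub j q' hq') hne h1
    · rw [hpend' j, if_pos hj] at hq hq'
      subst hj
      have hqm := hsub hq
      have hq'm := hsub hq'
      have hqk := (Finset.mem_filter.mp hq).2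
      have hq'k := (Finset.mem_filter.mp hq').2
      rcases (Sym2.eq_iff).mp (he'.trans hv.symm) with ⟨hq1, hw⟩ | ⟨hq1, hw⟩
      · -- q.1 = u, q'.1 = v
        rw [killP] at hqk hq'k
        push_neg at hqk hq'k
        have h2 := hqk.1 hq1
        rw [killCond] at h2; push_neg at h2
        have hulv := h2.2 ⟨q'.2, by rw [← hw]; exact hq'm⟩
        have h3 := hq'k.2 hw
        rw [killCond] at h3; push_neg at h3
        have hvlu := h3.2 ⟨q.2, by rw [← hq1]; exact hqm⟩
        exact huv (le_antisymm hvlu hulv)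
      · -- q.1 = v, q'.1 = u
        rw [killP] at hqk hq'k
        push_neg at hqk hq'k
        have h2 := hqk.2 hq1
        rw [killCond] at h2; push_neg at h2
        have hvlu := h2.2 ⟨q'.2, by rw [← hw]; exact hq'm⟩
        have h3 := hq'k.1 hw
        rw [killCond] at h3; push_neg at h3
        have hulv := h3.2 ⟨q.2, by rw [← hq1]; exact hqm⟩
        exact huv (le_antisymm hvlu hulv)
  · -- pedge
    intro j q hq
    exact Gm_append.mpr (Or.inl (hinv.pedge j q (hpsub j q hq)))
  · -- caps
    rw [hX]; exact hinv.caps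
  · -- cnt
    have hXeq : ∑ j, ((t1step σ i u v).X j).card = ∑ j, (σ.X j).card := by rw [hX]
    rw [hXeq]
    have hK : ((σ.pend i).filter (fun q => killP σ i u v q)).card ≤ 1 := by
      apply Finset.card_le_one.mpr
      intro q hq q' hq'
      have hqm := Finset.mem_filter.mp hq
      have hq'm := Finset.mem_filter.mp hq'
      by_cases hc : q.1 = q'.1
      · exact hinv.cInj i q q' hqm.1 hq'm.1 hc
      · exfalso
        -- distinct centres, both killed
        have key : ∀ a b : Fin n × Fin n, a ∈ σ.pend i → b ∈ σ.pend i →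
            killP σ i u v a → killP σ i u v b → a.1 = u → b.1 = v → False := by
          intro a b ha hb hka hkb ha1 hb1
          rcases hka with ⟨_, hc1⟩ | ⟨hav, _⟩
          · rcases hc1 with hvX | ⟨_, hulv⟩
            · exact hvX (hb1 ▸ hinv.cX i b hb)
            · rcases hkb with ⟨hbu, _⟩ | ⟨_, hc2⟩
              · exact huv (hbu.symm.trans hb1)
              · rcases hc2 with huX | ⟨_, hvlu⟩
                · exact huX hu
                · exact absurd hulv (not_lt_of_gt hvlu)
          · exact huv (ha1.symm.trans hav)
        rcases hqm.2 with ⟨h1, _⟩ | ⟨h1, _⟩ <;> rcases hq'm.2 with ⟨h1', _⟩ | ⟨h1', _⟩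
        · exact hc (h1.trans h1'.symm)
        · exact key q q' hqm.1 hq'm.1 hqm.2 hq'm.2 h1 h1'
        · exact key q' q hq'm.1 hqm.1 hq'm.2 hqm.2 h1' h1
        · exact hc (h1.trans h1'.symm)
    have hsplit : P'.card + ((σ.pend i).filter (fun q => killP σ i u v q)).card
        = (σ.pend i).card := by
      rw [hP']
      rw [add_comm]
      exact Finset.card_filter_add_card_filter_not _
    have hsum := sum_card_update σ.pend i P'
    have hlen : (h ++ [(e, i)]).length = h.length + 1 := by simp
    have hc := hinv.cnt
    have : ∑ j, ((t1step σ i u v).pend j).card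
        = ∑ j, ((Function.update σ.pend i P') j).card := rfl
    rw [this, hlen]
    omega

/-- T2 state update. -/
def t2step (σ : PSt n t) (i : Fin t) (q₀ : Fin n × Fin n) : PSt n t :=
  ⟨Function.update σ.X i (insert q₀.2 ((σ.X i).erase q₀.1)),
   Function.update σ.pend i ((σ.pend i).erase q₀)⟩

lemma inv_t2 {r : Fin t → ℕ} {σ : PSt n t} {h : GameHistory n t} (hinv : Inv r σ h)
    {e : Sym2 (Fin n)} (he : ¬ e.IsDiag) (hnew : e ∉ h.map Prod.fst)
    (hA : ∀ j, ∀ w ∈ σ.X j, w ∉ e)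
    {i : Fin t} {q₀ : Fin n × Fin n} (hq₀ : q₀ ∈ σ.pend i) (hu : q₀.2 ∈ e)
    {v : Fin n} (hv : s(q₀.2, v) = e) :
    Inv r (t2step σ i q₀) (h ++ [(e, i)]) := by
  have hxX : q₀.1 ∈ σ.X i := hinv.cX i q₀ hq₀
  have huX : ∀ j, q₀.2 ∉ σ.X j := fun j => hinv.pX j i q₀ hq₀
  have hvmem : v ∈ e := by rw [← hv]; exact Sym2.mem_mk_right _ _
  have hvX : ∀ j, v ∉ σ.X j := fun j hin => hA j v hin hvmem
  have huv : q₀.2 ≠ v := ne_of_ndiag he hv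
  have hvx : v ≠ q₀.1 := by
    intro hveq
    apply hnew
    have heq : s(q₀.1, q₀.2) = e := by rw [← hv, hveq]; exact Sym2.eq_swap
    have hin : (s(q₀.1, q₀.2), i) ∈ h := hinv.pedge i q₀ hq₀
    rw [heq] at hin
    exact List.mem_map.mpr ⟨(e, i), hin, rfl⟩
  have hux : q₀.2 ≠ q₀.1 := fun hh => (huX i) (hh ▸ hxX)
  have hXd : ∀ j, (t2step σ i q₀).X j
      = if j = i then insert q₀.2 ((σ.X i).erase q₀.1) else σ.X j := by
    intro j; simp [t2step, Function.update_apply]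
  have hPd : ∀ j, (t2step σ i q₀).pend j
      = if j = i then (σ.pend i).erase q₀ else σ.pend j := by
    intro j; simp [t2step, Function.update_apply]
  have hpsub : ∀ j q, q ∈ (t2step σ i q₀).pend j → q ∈ σ.pend j := by
    intro j q hq
    rw [hPd j] at hq
    by_cases hj : j = i
    · rw [if_pos hj] at hq; rw [hj]; exact Finset.mem_of_mem_erase hq
    · rwa [if_neg hj] at hq
  constructor
  · -- ndg
    intro q hq
    rcases List.mem_append.mp hq with h1 | h2
    · exact hinv.ndg q h1
    · simp at h2; rw [h2]; exact he
  · -- cover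
    intro j e' hGm
    rw [hXd j]
    rcases Gm_append.mp hGm with h1 | ⟨he', hj⟩
    · by_cases hj : j = i
      · rw [if_pos hj]
        rw [hj] at h1
        obtain ⟨w, hw1, hw2⟩ := hinv.cover i e' h1
        by_cases hwx : w = q₀.1
        · rw [hwx] at hw2
          have hnd : ¬ e'.IsDiag := hinv.ndg (e', i) h1
          have hspec : s(q₀.1, Sym2.Mem.other' hw2) = e' := Sym2.other_spec' hw2
          set w' := Sym2.Mem.other' hw2 with hw'def
          have hGm' : Gm h i s(q₀.1, w') := by rw [hspec]; exact h1
          rcases hinv.star i q₀ hq₀ w' hGm' with h2 | h2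
          · refine ⟨q₀.2, Finset.mem_insert_self _ _, ?_⟩
            rw [← h2, ← hspec]; exact Sym2.mem_mk_right _ _
          · have hw'x : w' ≠ q₀.1 := by
              intro hh
              exact hnd (hspec ▸ Sym2.mk_isDiag_iff.mpr hh.symm)
            refine ⟨w', Finset.mem_insert_of_mem (Finset.mem_erase.mpr ⟨hw'x, h2⟩), ?_⟩
            rw [← hspec]; exact Sym2.mem_mk_right _ _
        · exact ⟨w, Finset.mem_insert_of_mem (Finset.mem_erase.mpr ⟨hwx, hw1⟩), hw2⟩
      · rw [if_neg hj]
        exact hinv.cover j e' h1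
    · rw [if_pos hj]
      subst he'
      exact ⟨q₀.2, Finset.mem_insert_self _ _, hu⟩
  · -- cX
    intro j q hq
    have hqo := hpsub j q hq
    rw [hXd j]
    by_cases hj : j = i
    · rw [if_pos hj]
      rw [hj] at hqo
      rw [hPd j, if_pos hj] at hq
      have hne : q ≠ q₀ := (Finset.mem_erase.mp hq).1
      have h1 : q.1 ∈ σ.X i := hinv.cX i q hqo
      have h2 : q.1 ≠ q₀.1 := fun hh => hne (hinv.cInj i q q₀ hqo hq₀ hh)
      exact Finset.mem_insert_of_mem (Finset.mem_erase.mpr ⟨h2, h1⟩)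
    · rw [if_neg hj]
      exact hinv.cX j q hqo
  · -- pX
    intro j j' q hq
    have hqo := hpsub j' q hq
    rw [hXd j]
    by_cases hj : j = i
    · rw [if_pos hj]
      intro hmem
      rcases Finset.mem_insert.mp hmem with h1 | h1
      · obtain ⟨hji, hqq⟩ := hinv.pInj j' i q q₀ hqo hq₀ h1
        rw [hPd j', if_pos hji] at hq
        exact (Finset.mem_erase.mp hq).1 hqq
      · exact hinv.pX i j' q hqo (Finset.mem_of_mem_erase h1)
    · rw [if_neg hj]
      exact hinv.pX j j' q hqo
  · -- Xdis
    intro j j' hjj w hw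
    rw [hXd j] at hw
    rw [hXd j']
    by_cases h1 : j = i <;> by_cases h2 : j' = i
    · exact absurd (h1.trans h2.symm) hjj
    · rw [if_pos h1] at hw
      rw [if_neg h2]
      rcases Finset.mem_insert.mp hw with h3 | h3
      · rw [h3]; exact huX j'
      · rw [h1] at hjj
        exact hinv.Xdis i j' hjj w (Finset.mem_of_mem_erase h3)
    · rw [if_neg h1] at hw
      rw [if_pos h2]
      intro hmem
      rcases Finset.mem_insert.mp hmem with h3 | h3
      · exact huX j (h3 ▸ hw)
      · rw [h2] at hjj
        exact hinv.Xdis j i hjj w hw (Finset.mem_of_mem_erase h3)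
    · rw [if_neg h1] at hw
      rw [if_neg h2]
      exact hinv.Xdis j j' hjj w hw
  · -- pInj
    intro j j' q q' hq hq' hqq
    exact hinv.pInj j j' q q' (hpsub j q hq) (hpsub j' q' hq') hqq
  · -- cInj
    intro j q q' hq hq' hqq
    exact hinv.cInj j q q' (hpsub j q hq) (hpsub j q' hq') hqq
  · -- star
    intro j q hq w hGm
    have hqo := hpsub j q hq
    rw [hXd j]
    rcases Gm_append.mp hGm with h1 | ⟨he', hj⟩
    · rcases hinv.star j q hqo w h1 with h2 | h2
      · exact Or.inl h2
      · right
        by_cases hj : j = i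
        · rw [if_pos hj]
          rw [hj] at h2 h1 hqo
          by_cases hwx : w = q₀.1
          · exfalso
            subst hwx
            rw [hPd j, if_pos hj] at hq
            have hne : q ≠ q₀ := (Finset.mem_erase.mp hq).1
            exact hinv.estar i q q₀ hqo hq₀ hne h1
          · exact Finset.mem_insert_of_mem (Finset.mem_erase.mpr ⟨hwx, h2⟩)
        · rw [if_neg hj]; exact h2
    · exfalso
      have hq1X : q.1 ∈ σ.X j := hinv.cX j q hqo
      have hq1e : q.1 ∈ e := by rw [← he']; exact Sym2.mem_mk_left _ _
      rcases mem_of_eq hv hq1e with h3 | h3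
      · exact huX j (h3 ▸ hq1X)
      · exact hvX j (h3 ▸ hq1X)
  · -- estar
    intro j q q' hq hq' hne hGm
    have hqo := hpsub j q hq
    have hq'o := hpsub j q' hq'
    rcases Gm_append.mp hGm with h1 | ⟨he', hj⟩
    · exact hinv.estar j q q' hqo hq'o hne h1
    · have hq1X : q.1 ∈ σ.X j := hinv.cX j q hqo
      have hq1e : q.1 ∈ e := by rw [← he']; exact Sym2.mem_mk_left _ _
      rcases mem_of_eq hv hq1e with h3 | h3
      · exact huX j (h3 ▸ hq1X)
      · exact hvX j (h3 ▸ hq1X)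
  · -- pedge
    intro j q hq
    exact Gm_append.mpr (Or.inl (hinv.pedge j q (hpsub j q hq)))
  · -- caps
    intro j
    rw [hXd j]
    by_cases hj : j = i
    · rw [if_pos hj]
      have h1 : q₀.2 ∉ (σ.X i).erase q₀.1 := fun hh => huX i (Finset.mem_of_mem_erase hh)
      rw [Finset.card_insert_of_notMem h1, Finset.card_erase_of_mem hxX]
      have := hinv.caps i
      have hpos : 0 < (σ.X i).card := Finset.card_pos.mpr ⟨q₀.1, hxX⟩
      rw [hj]
      omega
    · rw [if_neg hj]
      exact hinv.caps j
  · -- cnt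
    have hXcard : (insert q₀.2 ((σ.X i).erase q₀.1)).card = (σ.X i).card := by
      have h1 : q₀.2 ∉ (σ.X i).erase q₀.1 := fun hh => huX i (Finset.mem_of_mem_erase hh)
      rw [Finset.card_insert_of_notMem h1, Finset.card_erase_of_mem hxX]
      have hpos : 0 < (σ.X i).card := Finset.card_pos.mpr ⟨q₀.1, hxX⟩
      omega
    have hs1 := sum_card_update σ.X i (insert q₀.2 ((σ.X i).erase q₀.1))
    have hs2 := sum_card_update σ.pend i ((σ.pend i).erase q₀)
    have hpcard : ((σ.pend i).erase q₀).card = (σ.pend i).card - 1 :=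
      Finset.card_erase_of_mem hq₀
    have hppos : 0 < (σ.pend i).card := Finset.card_pos.mpr ⟨q₀, hq₀⟩
    have hc := hinv.cnt
    have hlen : (h ++ [(e, i)]).length = h.length + 1 := by simp
    have e1 : ∑ j, ((t2step σ i q₀).X j).card
        = ∑ j, ((Function.update σ.X i (insert q₀.2 ((σ.X i).erase q₀.1))) j).card := rfl
    have e2 : ∑ j, ((t2step σ i q₀).pend j).card
        = ∑ j, ((Function.update σ.pend i ((σ.pend i).erase q₀)) j).card := rfl
    rw [e1, e2, hlen]
    omega


/-- T3 state update. -/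
def t3step (σ : PSt n t) (i : Fin t) (u v : Fin n) : PSt n t :=
  ⟨Function.update σ.X i (insert u (σ.X i)),
   Function.update σ.pend i (insert (u, v) (σ.pend i))⟩

lemma inv_t3 {r : Fin t → ℕ} {σ : PSt n t} {h : GameHistory n t} (hinv : Inv r σ h)
    {e : Sym2 (Fin n)} (he : ¬ e.IsDiag)
    (hA : ∀ j, ∀ w ∈ σ.X j, w ∉ e)
    (hB : ∀ j, ∀ q ∈ σ.pend j, q.2 ∉ e)
    {i : Fin t} (hroom : (σ.X i).card + 2 ≤ r i)
    {u v : Fin n} (hue : u ∈ e) (hv : s(u, v) = e) :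
    Inv r (t3step σ i u v) (h ++ [(e, i)]) := by
  have huv : u ≠ v := ne_of_ndiag he hv
  have hvmem : v ∈ e := by rw [← hv]; exact Sym2.mem_mk_right _ _
  have huX : ∀ j, u ∉ σ.X j := fun j hin => hA j u hin hue
  have hvX : ∀ j, v ∉ σ.X j := fun j hin => hA j v hin hvmem
  have huP : ∀ j, ∀ q ∈ σ.pend j, q.2 ≠ u := fun j q hq hh => hB j q hq (hh ▸ hue)
  have hvP : ∀ j, ∀ q ∈ σ.pend j, q.2 ≠ v := fun j q hq hh => hB j q hq (hh ▸ hvmem)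
  have hXd : ∀ j, (t3step σ i u v).X j
      = if j = i then insert u (σ.X i) else σ.X j := by
    intro j; simp [t3step, Function.update_apply]
  have hPd : ∀ j, (t3step σ i u v).pend j
      = if j = i then insert (u, v) (σ.pend i) else σ.pend j := by
    intro j; simp [t3step, Function.update_apply]
  -- membership characterization of new pend
  have hpmem : ∀ j q, q ∈ (t3step σ i u v).pend j →
      q ∈ σ.pend j ∨ (j = i ∧ q = (u, v)) := by
    intro j q hq
    rw [hPd j] at hq
    by_cases hj : j = i
    · rw [if_pos hj] at hq
      rcases Finset.mem_insert.mp hq with h1 | h1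
      · exact Or.inr ⟨hj, h1⟩
      · rw [hj]; exact Or.inl h1
    · rw [if_neg hj] at hq; exact Or.inl hq
  constructor
  · -- ndg
    intro q hq
    rcases List.mem_append.mp hq with h1 | h2
    · exact hinv.ndg q h1
    · simp at h2; rw [h2]; exact he
  · -- cover
    intro j e' hGm
    rw [hXd j]
    rcases Gm_append.mp hGm with h1 | ⟨he', hj⟩
    · by_cases hj : j = i
      · rw [if_pos hj]
        rw [hj] at h1
        obtain ⟨w, hw1, hw2⟩ := hinv.cover i e' h1
        exact ⟨w, Finset.mem_insert_of_mem hw1, hw2⟩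
      · rw [if_neg hj]; exact hinv.cover j e' h1
    · rw [if_pos hj]
      subst he'
      exact ⟨u, Finset.mem_insert_self _ _, hue⟩
  · -- cX
    intro j q hq
    rw [hXd j]
    rcases hpmem j q hq with h1 | ⟨hj, hq1⟩
    · by_cases hj : j = i
      · rw [if_pos hj]
        rw [hj] at h1
        exact Finset.mem_insert_of_mem (hinv.cX i q h1)
      · rw [if_neg hj]; exact hinv.cX j q h1
    · rw [if_pos hj, hq1]
      exact Finset.mem_insert_self _ _
  · -- pX
    intro j j' q hq
    rw [hXd j]
    rcases hpmem j' q hq with h1 | ⟨hj', hq1⟩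
    · by_cases hj : j = i
      · rw [if_pos hj]
        intro hmem
        rcases Finset.mem_insert.mp hmem with h2 | h2
        · exact huP j' q h1 h2
        · exact hinv.pX i j' q h1 h2
      · rw [if_neg hj]; exact hinv.pX j j' q h1
    · rw [hq1]
      by_cases hj : j = i
      · rw [if_pos hj]
        intro hmem
        rcases Finset.mem_insert.mp hmem with h2 | h2
        · exact huv h2.symm
        · exact hvX i h2
      · rw [if_neg hj]
        exact hvX j
  · -- Xdis
    intro j j' hjj w hw
    rw [hXd j] at hw
    rw [hXd j']
    by_cases h1 : j = i <;> by_cases h2 : j' = i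
    · exact absurd (h1.trans h2.symm) hjj
    · rw [if_pos h1] at hw
      rw [if_neg h2]
      rcases Finset.mem_insert.mp hw with h3 | h3
      · rw [h3]; exact huX j'
      · rw [h1] at hjj
        exact hinv.Xdis i j' hjj w h3
    · rw [if_neg h1] at hw
      rw [if_pos h2]
      intro hmem
      rcases Finset.mem_insert.mp hmem with h3 | h3
      · exact huX j (h3 ▸ hw)
      · rw [h2] at hjj
        exact hinv.Xdis j i hjj w hw h3
    · rw [if_neg h1] at hw
      rw [if_neg h2]
      exact hinv.Xdis j j' hjj w hw
  · -- pInj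
    intro j j' q q' hq hq' hqq
    rcases hpmem j q hq with h1 | ⟨hj, hq1⟩ <;> rcases hpmem j' q' hq' with h2 | ⟨hj', hq2⟩
    · exact hinv.pInj j j' q q' h1 h2 hqq
    · exfalso
      rw [hq2] at hqq
      exact hvP j q h1 hqq
    · exfalso
      rw [hq1] at hqq
      exact hvP j' q' h2 hqq.symm
    · rw [hq1, hq2, hj, hj']
      exact ⟨rfl, rfl⟩
  · -- cInj
    intro j q q' hq hq' hqq
    rcases hpmem j q hq with h1 | ⟨hj, hq1⟩ <;> rcases hpmem j q' hq' with h2 | ⟨hj', hq2⟩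
    · exact hinv.cInj j q q' h1 h2 hqq
    · exfalso
      have hx : q.1 ∈ σ.X j := hinv.cX j q h1
      rw [hq2] at hqq
      rw [hqq] at hx
      exact huX j hx
    · exfalso
      have hx : q'.1 ∈ σ.X j := hinv.cX j q' h2
      rw [hq1] at hqq
      rw [← hqq] at hx
      exact huX j hx
    · rw [hq1, hq2]
  · -- star
    intro j q hq w hGm
    rw [hXd j]
    rcases hpmem j q hq with h1 | ⟨hj, hq1⟩
    · rcases Gm_append.mp hGm with h2 | ⟨he', hj⟩
      · rcases hinv.star j q h1 w h2 with h3 | h3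
        · exact Or.inl h3
        · right
          by_cases hj : j = i
          · rw [if_pos hj]
            rw [hj] at h3
            exact Finset.mem_insert_of_mem h3
          · rw [if_neg hj]; exact h3
      · exfalso
        have hq1X : q.1 ∈ σ.X j := hinv.cX j q h1
        have hq1e : q.1 ∈ e := by rw [← he']; exact Sym2.mem_mk_left _ _
        rcases mem_of_eq hv hq1e with h3 | h3
        · exact huX j (h3 ▸ hq1X)
        · exact hvX j (h3 ▸ hq1X)
    · rw [hq1]
      rw [hq1] at hGm
      rcases Gm_append.mp hGm with h2 | ⟨he', hj2⟩
      · -- old edge s(u, w)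
        right
        rw [if_pos hj]
        obtain ⟨z, hz1, hz2⟩ := hinv.cover j s(u, w) h2
        rw [hj] at hz1
        rcases Sym2.mem_iff.mp hz2 with h3 | h3
        · exfalso; exact huX i (h3 ▸ hz1)
        · exact Finset.mem_insert_of_mem (h3 ▸ hz1)
      · -- new edge
        left
        rcases Sym2.eq_iff.mp (he'.trans hv.symm) with ⟨_, hw⟩ | ⟨hq1', hw⟩
        · exact hw
        · exact absurd hq1' huv
  · -- estar
    intro j q q' hq hq' hne hGm
    rcases hpmem j q hq with h1 | ⟨hj, hq1⟩ <;> rcases hpmem j q' hq' with h2 | ⟨hj', hq2⟩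
    · rcases Gm_append.mp hGm with h3 | ⟨he', hj3⟩
      · exact hinv.estar j q q' h1 h2 hne h3
      · have hq1X : q.1 ∈ σ.X j := hinv.cX j q h1
        have hq1e : q.1 ∈ e := by rw [← he']; exact Sym2.mem_mk_left _ _
        rcases mem_of_eq hv hq1e with h3 | h3
        · exact huX j (h3 ▸ hq1X)
        · exact hvX j (h3 ▸ hq1X)
    · -- q old, q' = (u,v)
      rw [hq2] at hGm
      rcases Gm_append.mp hGm with h3 | ⟨he', hj3⟩
      · -- old edge s(q.1, u): use star of q with w = u
        have hsw : Gm h j s(q.1, u) := h3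
        rcases hinv.star j q h1 u hsw with h4 | h4
        · exact huP j q h1 h4.symm
        · exact huX j h4
      · -- new edge : s(q.1, u) = s(u, v)
        rcases Sym2.eq_iff.mp (he'.trans hv.symm) with ⟨hh1, hh2⟩ | ⟨hh1, hh2⟩
        · exact huX j (hh1 ▸ hinv.cX j q h1)
        · exact hvX j (hh1 ▸ hinv.cX j q h1)
    · -- q = (u,v), q' old
      rw [hq1] at hGm
      rcases Gm_append.mp hGm with h3 | ⟨he', hj3⟩
      · have hsw : Gm h j s(q'.1, u) := by
          have : s(u, q'.1) = s(q'.1, u) := Sym2.eq_swap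
          rw [← this]; exact h3
        rcases hinv.star j q' h2 u hsw with h4 | h4
        · exact huP j q' h2 h4.symm
        · exact huX j h4
      · rcases Sym2.eq_iff.mp (he'.trans hv.symm) with ⟨hh1, hh2⟩ | ⟨hh1, hh2⟩
        · exact hvX j (hh2 ▸ hinv.cX j q' h2)
        · exact huX j (hh2 ▸ hinv.cX j q' h2)
    · rw [hq1, hq2] at hne
      exact hne rfl
  · -- pedge
    intro j q hq
    rcases hpmem j q hq with h1 | ⟨hj, hq1⟩
    · exact Gm_append.mpr (Or.inl (hinv.pedge j q h1))
    · rw [hq1, hj]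
      exact Gm_append.mpr (Or.inr ⟨hv, rfl⟩)
  · -- caps
    intro j
    rw [hXd j]
    by_cases hj : j = i
    · rw [if_pos hj, hj]
      have := Finset.card_insert_le u (σ.X i)
      omega
    · rw [if_neg hj]
      exact hinv.caps j
  · -- cnt
    have hXcard : (insert u (σ.X i)).card = (σ.X i).card + 1 :=
      Finset.card_insert_of_notMem (huX i)
    have hPcard : (insert (u, v) (σ.pend i)).card = (σ.pend i).card + 1 := by
      apply Finset.card_insert_of_notMem
      intro hmem
      exact huX i (hinv.cX i (u, v) hmem)
    have hs1 := sum_card_update σ.X i (insert u (σ.X i))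
    have hs2 := sum_card_update σ.pend i (insert (u, v) (σ.pend i))
    have hc := hinv.cnt
    have hlen : (h ++ [(e, i)]).length = h.length + 1 := by simp
    have e1 : ∑ j, ((t3step σ i u v).X j).card
        = ∑ j, ((Function.update σ.X i (insert u (σ.X i))) j).card := rfl
    have e2 : ∑ j, ((t3step σ i u v).pend j).card
        = ∑ j, ((Function.update σ.pend i (insert (u, v) (σ.pend i))) j).card := rfl
    rw [e1, e2, hlen]
    omega

lemma t0_bound {r : Fin t → ℕ} {σ : PSt n t} {h : GameHistory n t} (hinv : Inv r σ h)
    {e : Sym2 (Fin n)} (he : ¬ e.IsDiag)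
    (hA : ∀ j, ∀ w ∈ σ.X j, w ∉ e)
    (hB : ∀ j, ∀ q ∈ σ.pend j, q.2 ∉ e)
    (hR : ∀ j, ¬ ((σ.X j).card + 2 ≤ r j))
    {u v : Fin n} (hue : u ∈ e) (hv : s(u, v) = e) :
    3 * (∑ j, (r j - 1)) + 2 ≤ h.length + n := by
  have huv : u ≠ v := ne_of_ndiag he hv
  have hvmem : v ∈ e := by rw [← hv]; exact Sym2.mem_mk_right _ _
  have hfull : ∀ j, (σ.X j).card = r j - 1 := by
    intro j
    have h1 := hinv.caps j
    have h2 := hR j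
    omega
  have hPhi : ∑ j, (r j - 1) = ∑ j, (σ.X j).card := by
    apply Finset.sum_congr rfl
    intro j _
    exact (hfull j).symm
  -- the critical set
  set XU : Finset (Fin n) := Finset.univ.biUnion σ.X with hXU
  set PU : Finset (Fin n) := Finset.univ.biUnion (fun j => (σ.pend j).image Prod.snd) with hPU
  have hXUcard : XU.card = ∑ j, (σ.X j).card := by
    rw [hXU]
    apply Finset.card_biUnion
    intro j _ j' _ hjj
    rw [Function.onFun, Finset.disjoint_left]
    intro w hw hw'
    exact hinv.Xdis j j' hjj w hw hw'
  have hPUcard : PU.card = ∑ j, (σ.pend j).card := by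
    rw [hPU]
    rw [Finset.card_biUnion]
    · apply Finset.sum_congr rfl
      intro j _
      apply Finset.card_image_of_injOn
      intro q hq q' hq' hqq
      exact ((hinv.pInj j j q q' hq hq' hqq).2)
    · intro j _ j' _ hjj
      rw [Function.onFun, Finset.disjoint_left]
      intro w hw hw'
      obtain ⟨q, hq, hq2⟩ := Finset.mem_image.mp hw
      obtain ⟨q', hq', hq2'⟩ := Finset.mem_image.mp hw'
      exact hjj (hinv.pInj j j' q q' hq hq' (hq2.trans hq2'.symm)).1
  have hdisj : Disjoint XU PU := by
    rw [Finset.disjoint_left]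
    intro w hw hw'
    obtain ⟨j, _, hwj⟩ := Finset.mem_biUnion.mp hw
    obtain ⟨j', _, hwj'⟩ := Finset.mem_biUnion.mp hw'
    obtain ⟨q, hq, hq2⟩ := Finset.mem_image.mp hwj'
    exact hinv.pX j j' q hq (hq2 ▸ hwj)
  have huXU : u ∉ XU := by
    intro hmem
    obtain ⟨j, _, hwj⟩ := Finset.mem_biUnion.mp hmem
    exact hA j u hwj hue
  have hvXU : v ∉ XU := by
    intro hmem
    obtain ⟨j, _, hwj⟩ := Finset.mem_biUnion.mp hmem
    exact hA j v hwj hvmem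
  have huPU : u ∉ PU := by
    intro hmem
    obtain ⟨j, _, hwj⟩ := Finset.mem_biUnion.mp hmem
    obtain ⟨q, hq, hq2⟩ := Finset.mem_image.mp hwj
    exact hB j q hq (hq2 ▸ hue)
  have hvPU : v ∉ PU := by
    intro hmem
    obtain ⟨j, _, hwj⟩ := Finset.mem_biUnion.mp hmem
    obtain ⟨q, hq, hq2⟩ := Finset.mem_image.mp hwj
    exact hB j q hq (hq2 ▸ hvmem)
  have hcard : XU.card + PU.card + 2 ≤ n := by
    have h1 : (insert u (insert v (XU ∪ PU))).card ≤ Fintype.card (Fin n) :=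
      Finset.card_le_univ _
    rw [Fintype.card_fin] at h1
    rw [Finset.card_insert_of_notMem, Finset.card_insert_of_notMem,
        Finset.card_union_of_disjoint hdisj] at h1
    · omega
    · intro hmem
      rcases Finset.mem_union.mp hmem with hh | hh
      · exact hvXU hh
      · exact hvPU hh
    · intro hmem
      rcases Finset.mem_insert.mp hmem with hh | hh
      · exact huv hh
      · rcases Finset.mem_union.mp hh with hh' | hh'
        · exact huXU hh'
        · exact huPU hh'
  have hc := hinv.cnt
  omega


lemma step_preserves {r : Fin t → ℕ} (i₀ : Fin t) {σ : PSt n t} {h : GameHistory n t}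
    (hinv : Inv r σ h) {e : Sym2 (Fin n)} (he : ¬ e.IsDiag) (hnew : e ∉ h.map Prod.fst)
    (hcnt : h.length + n ≤ 3 * (∑ j, (r j - 1)) + 1) :
    Inv r (stepF r i₀ σ e).2 (h ++ [(e, (stepF r i₀ σ e).1)]) := by
  unfold stepF
  rw [dif_neg he]
  by_cases hA : (Finset.univ.filter (fun i => ∃ w ∈ σ.X i, w ∈ e)).Nonempty
  · rw [dif_pos hA]
    set A := Finset.univ.filter (fun i => ∃ w ∈ σ.X i, w ∈ e) with hAdef
    set i := A.min' hA with hidef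
    have hi : ∃ w ∈ σ.X i, w ∈ e := (Finset.mem_filter.mp (A.min'_mem hA)).2
    set U := (σ.X i).filter (· ∈ e) with hUdef
    have hU : U.Nonempty := by
      obtain ⟨w, hw1, hw2⟩ := hi
      exact ⟨w, Finset.mem_filter.mpr ⟨hw1, hw2⟩⟩
    set u := U.min' hU with hudef
    have huX : u ∈ σ.X i := (Finset.mem_filter.mp (U.min'_mem hU)).1
    have hue : u ∈ e := (Finset.mem_filter.mp (U.min'_mem hU)).2
    exact inv_t1 hinv he hnew huX hue (Sym2.other_spec' hue)
  · rw [dif_neg hA]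
    have hA' : ∀ j, ∀ w ∈ σ.X j, w ∉ e := by
      intro j w hw hwe
      exact hA ⟨j, Finset.mem_filter.mpr ⟨Finset.mem_univ _, ⟨w, hw, hwe⟩⟩⟩
    by_cases hB : (Finset.univ.filter (fun i => ∃ q ∈ σ.pend i, q.2 ∈ e)).Nonempty
    · rw [dif_pos hB]
      set B := Finset.univ.filter (fun i => ∃ q ∈ σ.pend i, q.2 ∈ e) with hBdef
      set i := B.min' hB with hidef
      have hi : ∃ q ∈ σ.pend i, q.2 ∈ e := (Finset.mem_filter.mp (B.min'_mem hB)).2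
      set Q := (σ.pend i).filter (fun q => q.2 ∈ e) with hQdef
      have hQ : Q.Nonempty := by
        obtain ⟨q, hq1, hq2⟩ := hi
        exact ⟨q, Finset.mem_filter.mpr ⟨hq1, hq2⟩⟩
      have hq₀ : hQ.choose ∈ σ.pend i := (Finset.mem_filter.mp hQ.choose_spec).1
      have hq₀e : hQ.choose.2 ∈ e := (Finset.mem_filter.mp hQ.choose_spec).2
      exact inv_t2 hinv he hnew hA' hq₀ hq₀e (Sym2.other_spec' hq₀e)
    · rw [dif_neg hB]
      have hB' : ∀ j, ∀ q ∈ σ.pend j, q.2 ∉ e := by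
        intro j q hq hqe
        exact hB ⟨j, Finset.mem_filter.mpr ⟨Finset.mem_univ _, ⟨q, hq, hqe⟩⟩⟩
      by_cases hR : (Finset.univ.filter (fun i => (σ.X i).card + 2 ≤ r i)).Nonempty
      · rw [dif_pos hR]
        set R := Finset.univ.filter (fun i => (σ.X i).card + 2 ≤ r i) with hRdef
        set i := R.min' hR with hidef
        have hi : (σ.X i).card + 2 ≤ r i := (Finset.mem_filter.mp (R.min'_mem hR)).2
        exact inv_t3 hinv he hA' hB' hi (emin_mem e he) (Sym2.other_spec' (emin_mem e he))
      · exfalso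
        have hR' : ∀ j, ¬ ((σ.X j).card + 2 ≤ r j) := by
          intro j hj
          exact hR ⟨j, Finset.mem_filter.mpr ⟨Finset.mem_univ _, hj⟩⟩
        have := t0_bound hinv he hA' hB' hR' (emin_mem e he) (Sym2.other_spec' (emin_mem e he))
        omega


noncomputable def initSt : PSt n t := ⟨fun _ => ∅, fun _ => ∅⟩

noncomputable def painterState (r : Fin t → ℕ) (i₀ : Fin t) (l : List (Sym2 (Fin n))) :
    PSt n t :=
  l.foldl (fun σ e => (stepF r i₀ σ e).2) initSt

noncomputable def painter (r : Fin t → ℕ) (i₀ : Fin t) : PainterStrategy n t :=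
  fun h e => (stepF r i₀ (painterState r i₀ (h.map Prod.fst)) e).1

lemma inv_init {r : Fin t → ℕ} (hr : ∀ i, 1 ≤ r i) :
    Inv r (initSt : PSt n t) ([] : GameHistory n t) := by
  constructor <;> simp [initSt, Gm]
  exact hr

lemma gamePlay_length (B : BuilderStrategy n t) (P : PainterStrategy n t) (k : ℕ) :
    (gamePlay B P k).length = k := by
  induction k with
  | zero => rfl
  | succ k ih => simp [gamePlay, ih]

lemma game_inv {r : Fin t → ℕ} (hr : ∀ i, 1 ≤ r i) (i₀ : Fin t) (B : BuilderStrategy n t)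
    (k : ℕ) (hval : BuilderValid B (painter r i₀) k)
    (hk : k + n ≤ 3 * (∑ j, (r j - 1)) + 2) :
    ∀ j, j ≤ k →
      Inv r (painterState r i₀ ((gamePlay B (painter r i₀) j).map Prod.fst))
        (gamePlay B (painter r i₀) j) := by
  intro j
  induction j with
  | zero => intro _; exact inv_init hr
  | succ j ih =>
    intro hjk
    have hinv := ih (Nat.le_of_succ_le hjk)
    set P := painter r i₀ with hPdef
    set hst := gamePlay B P j with hhst
    set e := B hst with hedef
    obtain ⟨hndg, hnew⟩ := hval j (Nat.lt_of_succ_le hjk)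
    have hlen : hst.length = j := gamePlay_length B P j
    have hcnt : hst.length + n ≤ 3 * (∑ j, (r j - 1)) + 1 := by omega
    have hstep := step_preserves i₀ hinv hndg hnew hcnt
    have hgp : gamePlay B P (j + 1) = hst ++ [(e, P hst e)] := rfl
    have hPe : P hst e = (stepF r i₀ (painterState r i₀ (hst.map Prod.fst)) e).1 := rfl
    rw [hgp]
    have hps' : painterState r i₀ ((hst ++ [(e, P hst e)]).map Prod.fst)
        = (stepF r i₀ (painterState r i₀ (hst.map Prod.fst)) e).2 := by
      rw [List.map_append]
      unfold painterState
      rw [List.foldl_append]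
      rfl
    rw [hps', hPe]
    exact hstep

lemma no_matching {r : Fin t → ℕ} {σ : PSt n t} {h : GameHistory n t} (hinv : Inv r σ h) :
    ¬ HistoryHasMatching n t r h := by
  rintro ⟨i, M, hcard, ⟨hnd, hdisj⟩, hcol⟩
  have hM : ∀ e ∈ M, ∃ w, w ∈ σ.X i ∧ w ∈ e := by
    intro e hee
    obtain ⟨w, hw1, hw2⟩ := hinv.cover i e (hcol e hee)
    exact ⟨w, hw1, hw2⟩
  have hle : M.card ≤ (σ.X i).card := by
    rw [← Finset.card_attach]
    apply Finset.card_le_card_of_injOn (f := fun e => (hM e.1 e.2).choose)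
    · intro a _
      exact (hM a.1 a.2).choose_spec.1
    · intro a _ b _ hab
      change (hM a.1 a.2).choose = (hM b.1 b.2).choose at hab
      have ha := (hM a.1 a.2).choose_spec.2
      have hb := (hM b.1 b.2).choose_spec.2
      rw [hab] at ha
      by_contra hne
      have hne' : a.1 ≠ b.1 := fun hh => hne (Subtype.ext hh)
      exact hdisj a.2 b.2 hne' _ ha hb
  have := hinv.caps i
  omega

lemma no_win {r : Fin t → ℕ} (hr : ∀ i, 1 ≤ r i) (ht1 : 0 < t) (k : ℕ)
    (hk : k + n ≤ 3 * (∑ j, (r j - 1)) + 2) :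
    ¬ BuilderWinsIn n t r k := by
  rintro ⟨B, hval, hwin⟩
  set i₀ : Fin t := ⟨0, ht1⟩
  have hinv := game_inv hr i₀ B k (hval (painter r i₀)) hk k le_rfl
  exact no_matching hinv (hwin (painter r i₀))


/-! ### Part 1: Builder can win eventually -/

lemma map_not_isDiag {N M : ℕ} (f : Fin N → Fin M) (hf : Function.Injective f)
    {e : Sym2 (Fin N)} (he : ¬ e.IsDiag) : ¬ (Sym2.map f e).IsDiag := by
  induction e using Sym2.inductionOn with
  | hf a b =>
    rw [Sym2.map_pair_eq]
    rw [Sym2.mk_isDiag_iff] at he ⊢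
    intro hc
    exact he (hf hc)

lemma ramsey_base {t : ℕ} (r : Fin t → ℕ) {S : ℕ} (hS : S = (∑ i, (r i - 1)) + 1) :
    ∀ c : Sym2 (Fin (2 * S)) → Fin t,
      ColoringHasMatching (2 * S) t r c := by
  intro c
  have hSpos : 0 < S := by omega
  have hjlt : ∀ j : Fin S, 2 * (j : ℕ) + 1 < 2 * S := fun j => by have := j.2; omega
  set f : Fin S → Sym2 (Fin (2 * S)) :=
    fun j => s(⟨2 * j, by have := hjlt j; omega⟩, ⟨2 * j + 1, hjlt j⟩) with hf
  have hmem : ∀ (j : Fin S) (w : Fin (2 * S)), w ∈ f j →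
      (w : ℕ) = 2 * j ∨ (w : ℕ) = 2 * j + 1 := by
    intro j w hw
    rw [hf] at hw
    rcases Sym2.mem_iff.mp hw with h1 | h1 <;> rw [h1]
    · left; rfl
    · right; rfl
  have hpig : ∃ i, r i ≤ (Finset.univ.filter (fun j : Fin S => c (f j) = i)).card := by
    by_contra hcon
    push_neg at hcon
    have h1 : (Finset.univ : Finset (Fin S)).card
        = ∑ i, (Finset.univ.filter (fun j : Fin S => c (f j) = i)).card :=
      Finset.card_eq_sum_card_fiberwise (fun x _ => Finset.mem_univ (c (f x)))
    have h2 : ∑ i, (Finset.univ.filter (fun j : Fin S => c (f j) = i)).card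
        ≤ ∑ i, (r i - 1) := by
      apply Finset.sum_le_sum
      intro i _
      have := hcon i
      omega
    rw [Finset.card_univ, Fintype.card_fin] at h1
    omega
  obtain ⟨i, hi⟩ := hpig
  obtain ⟨T, hT, hTcard⟩ := Finset.exists_subset_card_eq hi
  have hfinj : Function.Injective f := by
    intro a b hab
    rw [hf] at hab
    rcases Sym2.eq_iff.mp hab with ⟨h1, _⟩ | ⟨h1, _⟩ <;>
      (have := Fin.mk.injEq (2*(a:ℕ)) _ _ _ ▸ h1; apply Fin.ext; rw [Fin.ext_iff] at h1; simp at h1; omega)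
  refine ⟨i, T.image f, ?_, ⟨?_, ?_⟩, ?_⟩
  · rw [Finset.card_image_of_injective _ hfinj, hTcard]
  · intro e hee
    obtain ⟨j, _, rfl⟩ := Finset.mem_image.mp hee
    rw [hf, Sym2.mk_isDiag_iff]
    intro hc
    rw [Fin.ext_iff] at hc
    simp at hc
  · intro e hee e' hee' hne
    obtain ⟨j, _, rfl⟩ := Finset.mem_image.mp (Finset.mem_coe.mp hee)
    obtain ⟨j', _, rfl⟩ := Finset.mem_image.mp (Finset.mem_coe.mp hee')
    have hjj : j ≠ j' := fun hh => hne (by rw [hh])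
    intro w hw hw'
    rcases hmem j w hw with h1 | h1 <;> rcases hmem j' w hw' with h2 | h2 <;>
      (rw [h1] at h2; have : (j : ℕ) ≠ (j' : ℕ) := fun hh => hjj (Fin.ext hh); omega)
  · intro e hee
    obtain ⟨j, hj, rfl⟩ := Finset.mem_image.mp hee
    exact (Finset.mem_filter.mp (hT hj)).2

lemma ramsey_mono {t : ℕ} (r : Fin t → ℕ) {N M : ℕ}
    (hN : ∀ c : Sym2 (Fin N) → Fin t, ColoringHasMatching N t r c) (hNM : N ≤ M) :
    ∀ c : Sym2 (Fin M) → Fin t, ColoringHasMatching M t r c := by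
  intro c
  set emb : Fin N → Fin M := Fin.castLE hNM with hemb
  have hembinj : Function.Injective emb := Fin.castLE_injective hNM
  obtain ⟨i, Ms, hcard, ⟨hnd, hdis⟩, hcol⟩ := hN (fun e => c (e.map emb))
  refine ⟨i, Ms.image (Sym2.map emb), ?_, ⟨?_, ?_⟩, ?_⟩
  · rw [Finset.card_image_of_injective _ (Sym2.map.injective hembinj), hcard]
  · intro e hee
    obtain ⟨e₀, he₀, rfl⟩ := Finset.mem_image.mp hee
    exact map_not_isDiag emb hembinj (hnd e₀ he₀)
  · intro e hee e' hee' hne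
    obtain ⟨e₀, he₀, rfl⟩ := Finset.mem_image.mp (Finset.mem_coe.mp hee)
    obtain ⟨e₁, he₁, rfl⟩ := Finset.mem_image.mp (Finset.mem_coe.mp hee')
    have h01 : e₀ ≠ e₁ := fun hh => hne (by rw [hh])
    intro w hw hw'
    obtain ⟨w₀, hw₀, hw₀'⟩ := Sym2.mem_map.mp hw
    obtain ⟨w₁, hw₁, hw₁'⟩ := Sym2.mem_map.mp hw'
    have : w₀ = w₁ := hembinj (hw₀'.trans hw₁'.symm)
    exact hdis he₀ he₁ h01 w₀ hw₀ (this ▸ hw₁)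
  · intro e hee
    obtain ⟨e₀, he₀, rfl⟩ := Finset.mem_image.mp hee
    exact hcol e₀ he₀


lemma not_mem_take {α : Type*} (l : List α) (hnd : l.Nodup) (j : ℕ) (hj : j < l.length) :
    l[j] ∉ l.take j := by
  intro hmem
  rw [List.mem_take_iff_getElem] at hmem
  obtain ⟨i, hi, heq⟩ := hmem
  have hi' : i < l.length := lt_of_lt_of_le (lt_min_iff.mp hi).2 le_rfl
  have := (List.Nodup.getElem_inj_iff hnd (hi := hi') (hj := hj)).mp heq
  have hik : i < j := (lt_min_iff.mp hi).1
  omega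

lemma two_le_of_ramsey {t : ℕ} (ht1 : 0 < t) {r : Fin t → ℕ} (hr : ∀ i, 1 ≤ r i) {n : ℕ}
    (hn : ∀ c : Sym2 (Fin n) → Fin t, ColoringHasMatching n t r c) : 2 ≤ n := by
  by_contra hcon
  push_neg at hcon
  obtain ⟨i, M, hcard, ⟨hnd, _⟩, _⟩ := hn (fun _ => ⟨0, ht1⟩)
  have hM : M.Nonempty := by
    rw [← Finset.card_pos, hcard]
    exact hr i
  obtain ⟨e, he⟩ := hM
  have hend := hnd e he
  have h1 := emin_mem e hend
  have h2 := Sym2.other_spec' h1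
  have h3 : emin e hend ≠ Sym2.Mem.other' h1 := ne_of_ndiag hend h2
  have b1 := (emin e hend).2
  have b2 := (Sym2.Mem.other' h1).2
  rw [Fin.ne_iff_vne] at h3
  omega

lemma builder_wins {t : ℕ} (ht1 : 0 < t) {r : Fin t → ℕ} {n : ℕ} (hn2 : 2 ≤ n)
    (hRSn : ∀ c : Sym2 (Fin n) → Fin t, ColoringHasMatching n t r c) :
    ∃ K, BuilderWinsIn n t r K := by
  set L := ((Finset.univ : Finset (Sym2 (Fin n))).filter (fun e => ¬ e.IsDiag)).toList with hL
  have hnodup : L.Nodup := Finset.nodup_toList _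
  have hmemL : ∀ e, e ∈ L ↔ ¬ e.IsDiag := by
    intro e; rw [hL, Finset.mem_toList, Finset.mem_filter]; simp
  set d : Sym2 (Fin n) := s(⟨0, by omega⟩, ⟨1, by omega⟩) with hd
  set B : BuilderStrategy n t := fun h => L.getD h.length d with hB
  have hBval : ∀ (P : PainterStrategy n t) (j : ℕ) (hj : j < L.length),
      B (gamePlay B P j) = L[j] := by
    intro P j hj
    rw [hB]
    simp only
    rw [gamePlay_length]
    exact List.getD_eq_getElem L d hj
  have hmap : ∀ (P : PainterStrategy n t) (j : ℕ), j ≤ L.length →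
      (gamePlay B P j).map Prod.fst = L.take j := by
    intro P j
    induction j with
    | zero => simp [gamePlay]
    | succ j ih =>
      intro hj
      have hj' : j < L.length := hj
      have ihh := ih (le_of_lt hj')
      rw [show gamePlay B P (j+1)
          = gamePlay B P j ++ [(B (gamePlay B P j), P (gamePlay B P j) (B (gamePlay B P j)))]
          from rfl]
      rw [List.map_append, ihh, hBval P j hj']
      rw [List.take_succ, List.getElem?_eq_getElem hj']
      simp
  refine ⟨L.length, B, ?_, ?_⟩
  · -- validity
    intro P j hj
    rw [hBval P j hj, hmap P j (le_of_lt hj)]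
    constructor
    · exact (hmemL _).mp (List.getElem_mem hj)
    · exact not_mem_take L hnodup j hj
  · -- winning
    intro P
    set h := gamePlay B P L.length with hh
    have hmapK : h.map Prod.fst = L := by
      rw [hh, hmap P L.length le_rfl, List.take_length]
    set c : Sym2 (Fin n) → Fin t :=
      fun e => (((h.find? (fun q => decide (q.1 = e)))).map Prod.snd).getD ⟨0, ht1⟩ with hc
    have key : ∀ e, ¬ e.IsDiag → (e, c e) ∈ h := by
      intro e hend
      have heL : e ∈ L := (hmemL e).mpr hend
      rw [← hmapK] at heL
      obtain ⟨q, hq, hq1⟩ := List.mem_map.mp heL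
      have hsome : (h.find? (fun q => decide (q.1 = e))).isSome :=
        List.find?_isSome.mpr ⟨q, hq, by simp [hq1]⟩
      obtain ⟨q', hq'⟩ := Option.isSome_iff_exists.mp hsome
      have h1 : q' ∈ h := List.mem_of_find?_eq_some hq'
      have h2 : q'.1 = e := by have := List.find?_some hq'; simpa using this
      have h3 : c e = q'.2 := by rw [hc]; simp only; rw [hq']; rfl
      rw [h3, ← h2]
      exact h1
    obtain ⟨i, M, hcard, hmatch, hcol⟩ := hRSn c
    refine ⟨i, M, hcard, hmatch, ?_⟩
    intro e hee
    have := key e (hmatch.1 e hee)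
    rwa [hcol e hee] at this

end RORLB

/-- Theorem 3 (Dvořák): if `t ≥ 2`, `rᵢ ≥ 1` and `n ≥ R(r₁K₂,…,r_tK₂)`, then
`R̃(r₁K₂,…,r_tK₂; n) ≥ 3(r₁+⋯+r_t − t + 1) − n`. -/
theorem restrictedOnlineRamsey_lower_bound (t : ℕ) (ht : 2 ≤ t) (r : Fin t → ℕ)
    (hr : ∀ i, 1 ≤ r i) (n : ℕ) (hn : matchingRamsey t r ≤ n) :
    3 * ((∑ i, (r i : ℤ)) - t + 1) - n ≤ (restrictedOnlineRamsey n t r : ℤ) := by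
  have ht1 : 0 < t := by omega
  have hbase := RORLB.ramsey_base r (S := (∑ i, (r i - 1)) + 1) rfl
  have hRSne : {N | ∀ c : Sym2 (Fin N) → Fin t, ColoringHasMatching N t r c}.Nonempty :=
    ⟨2 * ((∑ i, (r i - 1)) + 1), hbase⟩
  have hsInf := Nat.sInf_mem hRSne
  have hnRS : ∀ c : Sym2 (Fin n) → Fin t, ColoringHasMatching n t r c :=
    RORLB.ramsey_mono r hsInf hn
  have hn2 := RORLB.two_le_of_ramsey ht1 hr hnRS
  obtain ⟨K, hK⟩ := RORLB.builder_wins ht1 hn2 hnRS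
  have hSne : {k | BuilderWinsIn n t r k}.Nonempty := ⟨K, hK⟩
  have hmem : restrictedOnlineRamsey n t r ∈ {k | BuilderWinsIn n t r k} := Nat.sInf_mem hSne
  have hbig : ¬ (restrictedOnlineRamsey n t r + n ≤ 3 * (∑ i, (r i - 1)) + 2) := by
    intro hle
    exact RORLB.no_win hr ht1 _ hle hmem
  push_neg at hbig
  have hcast : ((∑ i, (r i - 1) : ℕ) : ℤ) = (∑ i, (r i : ℤ)) - t := by
    rw [Nat.cast_sum]
    rw [show (∑ i, ((r i - 1 : ℕ) : ℤ)) = ∑ i, ((r i : ℤ) - 1) from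
      Finset.sum_congr rfl (fun i _ => by rw [Nat.cast_sub (hr i)]; simp)]
    rw [Finset.sum_sub_distrib]
    simp
  have hfin : (3 * (∑ i, (r i - 1) : ℕ) + 2 : ℤ) < (restrictedOnlineRamsey n t r : ℤ) + n := by
    exact_mod_cast hbig
  rw [hcast] at hfin
  linarith [hfin]
end

section
/- Fix an integer r ≥ 1. The 2-color Ramsey number of the matching rK_2 equals 3r − 1. That is: (1) for every coloring of the edges of the complete graph K_{3r−1} with 2 colors, some color class contains r pairwise disjoint edges; and (2) there exists a coloring of the edges of K_{3r−2} with 2 colors in which no color class contains r pairwise disjoint edges. -/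
/-!
Upper bound: induct on `r` inside a vertex set `S` with `3r ≤ |S| + 1`. If some vertex `x` of `S`
has edges `xy`, `xz` inside `S` of different colours, delete `x, y, z`, take a monochromatic
matching of size `r - 1` in the rest and add whichever of `xy`, `xz` has its colour. Otherwise all
edges inside `S` have one colour, and any `r` disjoint edges in `S` will do, as `|S| ≥ 2r`.

Lower bound: split the `3r - 2` vertices into `S` with `|S| = 2r - 1` and its complement with
`r - 1` vertices, and give colour `0` exactly to the edges inside `S`. A matching of colour `0`
uses two vertices of `S` per edge, and every edge of colour `1` meets the complement, so neither
colour has `r` disjoint edges.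
-/

open Finset

namespace IsMatchingIn

variable {n : ℕ} {M : Finset (Sym2 (Fin n))} {S T : Finset (Fin n)}

theorem empty : IsMatchingIn (∅ : Finset (Sym2 (Fin n))) :=
  ⟨by simp, by simp⟩

theorem insert_mk (hM : IsMatchingIn M) (hMT : M ⊆ T.sym2) {a b : Fin n} (hab : a ≠ b)
    (ha : a ∉ T) (hb : b ∉ T) : IsMatchingIn (insert s(a, b) M) := by
  have hdisj : ∀ f ∈ M, EdgeDisjoint s(a, b) f := by
    intro f hf v hv hvf
    have hvT := mem_sym2_iff.1 (hMT hf) v hvf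
    rcases Sym2.mem_iff.1 hv with rfl | rfl <;> contradiction
  refine ⟨?_, ?_⟩
  · simpa [Sym2.mk_isDiag_iff, hab] using hM.1
  · rw [coe_insert]
    exact Set.pairwise_insert.2 ⟨hM.2, fun f hf _ =>
      ⟨hdisj f hf, fun v hvf hv => hdisj f hf v hv hvf⟩⟩

theorem two_mul_card_le (hM : IsMatchingIn M) (hMS : M ⊆ S.sym2) : 2 * #M ≤ #S := by
  have hpd : (M : Set (Sym2 (Fin n))).PairwiseDisjoint Sym2.toFinset := by
    intro e he f hf hef
    exact disjoint_left.2 fun v hve hvf =>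
      hM.2 he hf hef v (Sym2.mem_toFinset.1 hve) (Sym2.mem_toFinset.1 hvf)
  calc 2 * #M = #(M.biUnion Sym2.toFinset) := by
        rw [card_biUnion hpd, sum_congr rfl fun e he =>
          Sym2.card_toFinset_of_not_isDiag e (hM.1 e he), sum_const, smul_eq_mul, mul_comm]
    _ ≤ #S := card_le_card <| biUnion_subset.2 fun e he v hv =>
        mem_sym2_iff.1 (hMS he) v (Sym2.mem_toFinset.1 hv)

theorem card_le_of_forall_exists_mem (hM : IsMatchingIn M) (hMT : ∀ e ∈ M, ∃ v ∈ T, v ∈ e) :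
    #M ≤ #T := by
  choose f hfT hfe using hMT
  rw [← card_attach]
  refine card_le_card_of_injOn (fun e => f e.1 e.2) (fun e _ => hfT e.1 e.2)
    fun e _ e' _ hf => Subtype.ext (by_contra fun hne => ?_)
  exact hM.2 e.2 e'.2 hne _ (hfe e.1 e.2) (by simpa only [hf] using hfe e'.1 e'.2)

end IsMatchingIn

theorem exists_isMatchingIn_subset_sym2 {n : ℕ} :
    ∀ (k : ℕ) (S : Finset (Fin n)), 2 * k ≤ #S →
      ∃ M ⊆ S.sym2, #M = k ∧ IsMatchingIn M
  | 0, _, _ => ⟨∅, empty_subset _, rfl, IsMatchingIn.empty⟩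
  | k + 1, S, hS => by
    obtain ⟨a, ha, b, hb, hab⟩ := one_lt_card.1 (show 1 < #S by omega)
    have hab_sub : {a, b} ⊆ S := insert_subset ha (singleton_subset_iff.2 hb)
    obtain ⟨M, hMT, hcard, hM⟩ := exists_isMatchingIn_subset_sym2 k (S \ {a, b}) (by
      rw [card_sdiff_of_subset hab_sub, card_pair hab]; omega)
    have ha' : a ∉ S \ {a, b} := by simp
    have hb' : b ∉ S \ {a, b} := by simp
    refine ⟨insert s(a, b) M, insert_subset (mk_mem_sym2_iff.2 ⟨ha, hb⟩)
      (hMT.trans (sym2_mono sdiff_subset)), ?_, hM.insert_mk hMT hab ha' hb'⟩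
    rw [card_insert_of_notMem fun h => ha' (mem_sym2_iff.1 (hMT h) a (Sym2.mem_mk_left a b)),
      hcard]

theorem colour_eq_of_forall_colour_eq_at_vertex {V α : Type*} {S : Set V} {κ : Sym2 V → α}
    (hstar : ∀ x ∈ S, ∀ y ∈ S, ∀ z ∈ S, x ≠ y → x ≠ z → κ s(x, y) = κ s(x, z))
    {a b p q : V} (ha : a ∈ S) (hb : b ∈ S) (hp : p ∈ S) (hq : q ∈ S) (hab : a ≠ b)
    (hpq : p ≠ q) : κ s(a, b) = κ s(p, q) := by
  by_cases hap : a = p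
  · subst hap
    exact hstar a ha b hb q hq hab hpq
  · calc κ s(a, b) = κ s(a, p) := hstar a ha b hb p hp hab hap
      _ = κ s(p, a) := by rw [Sym2.eq_swap]
      _ = κ s(p, q) := hstar p hp a ha q hq (Ne.symm hap) hpq

theorem exists_monochromatic_isMatchingIn {n : ℕ} (κ : Sym2 (Fin n) → Fin 2) :
    ∀ (r : ℕ) (S : Finset (Fin n)), 3 * r ≤ #S + 1 →
      ∃ i, ∃ M ⊆ S.sym2, #M = r ∧ IsMatchingIn M ∧ ∀ e ∈ M, κ e = i
  | 0, _, _ => ⟨0, ∅, empty_subset _, rfl, IsMatchingIn.empty, by simp⟩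
  | r + 1, S, hS => by
    by_cases hcherry : ∃ x ∈ S, ∃ y ∈ S, ∃ z ∈ S, x ≠ y ∧ x ≠ z ∧ κ s(x, y) ≠ κ s(x, z)
    · obtain ⟨x, hx, y, hy, z, hz, hxy, hxz, hne⟩ := hcherry
      have hyz : y ≠ z := by rintro rfl; exact hne rfl
      have hxyz_sub : {x, y, z} ⊆ S := by simp [insert_subset_iff, hx, hy, hz]
      obtain ⟨i, M, hMT, hcard, hM, hcol⟩ := exists_monochromatic_isMatchingIn κ r
        (S \ {x, y, z}) (by
          rw [card_sdiff_of_subset hxyz_sub, card_insert_of_notMem (by simp [hxy, hxz]),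
            card_pair hyz]
          omega)
      obtain ⟨w, hw, hxw, hw', hwi⟩ :
          ∃ w ∈ S, x ≠ w ∧ w ∉ S \ {x, y, z} ∧ κ s(x, w) = i := by
        rcases (by decide : ∀ j k l : Fin 2, j ≠ k → l = j ∨ l = k) _ _ i hne with h | h
        · exact ⟨y, hy, hxy, by simp, h.symm⟩
        · exact ⟨z, hz, hxz, by simp, h.symm⟩
      have hx' : x ∉ S \ {x, y, z} := by simp
      refine ⟨i, insert s(x, w) M, insert_subset (mk_mem_sym2_iff.2 ⟨hx, hw⟩)
        (hMT.trans (sym2_mono sdiff_subset)), ?_, hM.insert_mk hMT hxw hx' hw', ?_⟩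
      · rw [card_insert_of_notMem fun h => hx' (mem_sym2_iff.1 (hMT h) x (Sym2.mem_mk_left x w)),
          hcard]
      · simpa [hwi] using hcol
    · push Not at hcherry
      obtain ⟨x, hx, y, hy, hxy⟩ := one_lt_card.1 (show 1 < #S by omega)
      obtain ⟨M, hMS, hcard, hM⟩ := exists_isMatchingIn_subset_sym2 (r + 1) S (by omega)
      refine ⟨κ s(x, y), M, hMS, hcard, hM, fun e he => ?_⟩
      induction e using Sym2.inductionOn with
      | hf a b =>
        obtain ⟨ha, hb⟩ := mk_mem_sym2_iff.1 (hMS he)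
        exact colour_eq_of_forall_colour_eq_at_vertex (S := (S : Set (Fin n))) hcherry
          ha hb hx hy (by simpa using hM.1 _ he) hxy

theorem not_coloringHasMatching_of_card_lt {n r : ℕ} (S : Finset (Fin n)) (hS : #S < 2 * r)
    (hSc : #Sᶜ < r) :
    ¬ ColoringHasMatching n 2 (fun _ => r) (fun e => if e ∈ S.sym2 then 0 else 1) := by
  rintro ⟨i, M, hcard, hM, hcol⟩
  replace hcard : #M = r := hcard
  fin_cases i
  · have hMS : M ⊆ S.sym2 := fun e he => by
      by_contra h
      simpa [h] using hcol e he
    have := hM.two_mul_card_le hMS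
    omega
  · have hMSc : ∀ e ∈ M, ∃ v ∈ Sᶜ, v ∈ e := fun e he => by
      have h : e ∉ S.sym2 := fun h => by simpa [h] using hcol e he
      simpa [mem_sym2_iff, and_comm] using h
    have := hM.card_le_of_forall_exists_mem hMSc
    omega

/-- For `r ≥ 1`, the 2-colour Ramsey number of `rK₂` equals `3r − 1`: every 2-colouring
of `K_{3r−1}` has a monochromatic matching of size `r`, and some 2-colouring of
`K_{3r−2}` has none. -/
theorem ramsey_two_colour_matching (r : ℕ) (hr : 1 ≤ r) :
    (∀ c : Sym2 (Fin (3 * r - 1)) → Fin 2,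
        ColoringHasMatching (3 * r - 1) 2 (fun _ => r) c) ∧
      (∃ c : Sym2 (Fin (3 * r - 2)) → Fin 2,
        ¬ ColoringHasMatching (3 * r - 2) 2 (fun _ => r) c) := by
  refine ⟨fun κ => ?_, ?_⟩
  · obtain ⟨i, M, -, hcard, hM, hcol⟩ := exists_monochromatic_isMatchingIn κ r univ (by simp; omega)
    exact ⟨i, M, hcard, hM, hcol⟩
  · obtain ⟨S, -, hS⟩ := exists_subset_card_eq (s := (univ : Finset (Fin (3 * r - 2))))
      (n := 2 * r - 1) (by simp; omega)
    exact ⟨_, not_coloringHasMatching_of_card_lt S (by omega)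
      (by rw [card_compl, Fintype.card_fin]; omega)⟩
end

section
/- Fix an integer r ≥ 1. The 3-color Ramsey number of the matching rK_2 equals 4r − 2. That is: (1) for every coloring of the edges of the complete graph K_{4r−2} with 3 colors, some color class contains r pairwise disjoint edges; and (2) there exists a coloring of the edges of K_{4r−3} with 3 colors in which no color class contains r pairwise disjoint edges. -/
open Finset

/-!
Upper bound: if three colours appear on a vertex set `V`, then at most four vertices of `V`
already carry edges of all three colours. Whichever colour the inductively found matching on the
remaining `≥ 4(r - 1) - 2` vertices has, an edge of that colour among the four removed vertices
extends it. If only two colours appear, the same peeling with three vertices (a two-coloured path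
`p - q - s`) gives the two-colour bound `3r - 1`; with a single colour, any `2r` vertices suffice.

Lower bound: split the `4r - 3` vertices into classes `A`, `B`, `C` of sizes `2r - 1`, `r - 1`,
`r - 1`, labelled `0 < 1 < 2`, and colour an edge by the larger label of its ends. A matching of
colour `0` lies inside `A`, and every edge of colour `1` (resp. `2`) meets `B` (resp. `C`).
-/

variable {n : ℕ} {κ : Type*}

lemma IsMatchingIn.insert {M : Finset (Sym2 (Fin n))} {g : Sym2 (Fin n)} (hM : IsMatchingIn M)
    (hg : ¬ g.IsDiag) (hgM : ∀ e ∈ M, ∀ v ∈ g, v ∉ e) : IsMatchingIn (insert g M) := by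
  refine ⟨forall_mem_insert _ _ _ |>.2 ⟨hg, hM.1⟩, ?_⟩
  rw [coe_insert, Set.pairwise_insert]
  exact ⟨hM.2, fun e he _ => ⟨hgM e he, fun v hve hvg => hgM e he v hvg hve⟩⟩

lemma IsMatchingIn.card_filter_mem_le_one {M : Finset (Sym2 (Fin n))} (hM : IsMatchingIn M)
    (v : Fin n) : #{e ∈ M | v ∈ e} ≤ 1 := by
  refine card_le_one.2 fun e he f hf => by_contra fun hef => ?_
  rw [mem_filter] at he hf
  exact hM.2 he.1 hf.1 hef v he.2 hf.2

lemma IsMatchingIn.card_le_of_forall_exists_mem_s10 {M : Finset (Sym2 (Fin n))} {W : Finset (Fin n)}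
    (hM : IsMatchingIn M) (hW : ∀ e ∈ M, ∃ v ∈ W, v ∈ e) : #M ≤ #W := by
  simpa using card_mul_le_card_mul (fun e v => v ∈ e) (m := 1) (n := 1)
    (fun e he => card_pos.2 <| by simpa [bipartiteAbove, Finset.Nonempty] using hW e he)
    (fun v _ => hM.card_filter_mem_le_one v)

lemma IsMatchingIn.two_mul_card_le_s10 {M : Finset (Sym2 (Fin n))} {W : Finset (Fin n)}
    (hM : IsMatchingIn M) (hW : ∀ e ∈ M, ∀ v ∈ e, v ∈ W) : 2 * #M ≤ #W := by
  have := card_mul_le_card_mul (fun e v => v ∈ e) (m := 2) (n := 1) (s := M) (t := W)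
    (fun e he => by
      induction e using Sym2.ind with
      | _ x y =>
        have hxy : x ≠ y := by simpa using hM.1 _ he
        rw [← card_pair hxy]
        refine card_le_card fun v hv => ?_
        simp only [mem_insert, mem_singleton] at hv
        exact mem_filter.2 ⟨hW _ he v (by simpa using hv), by simpa using hv⟩)
    (fun v _ => hM.card_filter_mem_le_one v)
  omega

def SpansColour (c : Sym2 (Fin n) → κ) (T : Finset (Fin n)) (i : κ) : Prop :=
  ∃ x ∈ T, ∃ y ∈ T, x ≠ y ∧ c s(x, y) = i

def HasMonoMatchingIn (c : Sym2 (Fin n) → κ) (V : Finset (Fin n)) (i : κ) (m : ℕ) : Prop :=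
  ∃ M : Finset (Sym2 (Fin n)),
    #M = m ∧ IsMatchingIn M ∧ (∀ e ∈ M, ∀ v ∈ e, v ∈ V) ∧ ∀ e ∈ M, c e = i

namespace HasMonoMatchingIn

variable {c : Sym2 (Fin n) → κ} {V T : Finset (Fin n)} {i : κ} {m : ℕ}

lemma zero : HasMonoMatchingIn c V i 0 :=
  ⟨∅, card_empty, ⟨by simp, by simp⟩, by simp, by simp⟩

lemma succ (hTV : T ⊆ V) (hT : SpansColour c T i) (h : HasMonoMatchingIn c (V \ T) i m) :
    HasMonoMatchingIn c V i (m + 1) := by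
  obtain ⟨x, hx, y, hy, hxy, hc⟩ := hT
  obtain ⟨M, rfl, hM, hMV, hMc⟩ := h
  have hxyT : ∀ v ∈ s(x, y), v ∈ T := by
    intro v hv
    rcases Sym2.mem_iff.1 hv with rfl | rfl <;> assumption
  have hout : ∀ e ∈ M, ∀ v ∈ s(x, y), v ∉ e := fun e he v hv hve =>
    (mem_sdiff.1 (hMV e he v hve)).2 (hxyT v hv)
  refine ⟨insert s(x, y) M, card_insert_of_notMem fun hmem => ?_,
    hM.insert (by simpa using hxy) hout, ?_, ?_⟩
  · exact hout _ hmem x (Sym2.mem_mk_left x y) (Sym2.mem_mk_left x y)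
  · exact forall_mem_insert _ _ _ |>.2
      ⟨fun v hv => hTV (hxyT v hv), fun e he v hv => sdiff_subset (hMV e he v hv)⟩
  · exact forall_mem_insert _ _ _ |>.2 ⟨hc, hMc⟩

end HasMonoMatchingIn

section UpperBound

variable {c : Sym2 (Fin n) → κ} {V : Finset (Fin n)}

lemma hasMonoMatchingIn_of_forall_eq {i : κ} {m : ℕ}
    (hV : ∀ x ∈ V, ∀ y ∈ V, x ≠ y → c s(x, y) = i) (hm : 2 * m ≤ #V) :
    HasMonoMatchingIn c V i m := by
  induction m generalizing V with
  | zero => exact .zero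
  | succ m ih =>
    obtain ⟨x, hx, y, hy, hxy⟩ := one_lt_card.1 (by omega : 1 < #V)
    have hT : {x, y} ⊆ V := by simp [insert_subset_iff, hx, hy]
    refine .succ hT ⟨x, by simp, y, by simp, hxy, hV x hx y hy hxy⟩ <|
      ih (fun x hx y hy => hV x (sdiff_subset hx) y (sdiff_subset hy)) ?_
    rw [card_sdiff_of_subset hT, card_pair hxy]
    omega

lemma exists_path_or_third_colour {a b : κ} (ha : SpansColour c V a) (hb : SpansColour c V b) :
    (∃ p ∈ V, ∃ q ∈ V, ∃ s ∈ V, p ≠ q ∧ q ≠ s ∧ c s(p, q) = a ∧ c s(q, s) = b) ∨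
      ∃ T ⊆ V, #T ≤ 4 ∧ SpansColour c T a ∧ SpansColour c T b ∧
        ∃ j, j ≠ a ∧ j ≠ b ∧ SpansColour c T j := by
  obtain ⟨u, hu, v, hv, huv, hca⟩ := ha
  obtain ⟨x, hx, y, hy, hxy, hcb⟩ := hb
  by_cases hux : u = x
  · subst hux
    exact .inl ⟨v, hv, u, hu, y, hy, huv.symm, hxy, by rwa [Sym2.eq_swap], hcb⟩
  by_cases hcua : c s(u, x) = a
  · exact .inl ⟨u, hu, x, hx, y, hy, hux, hxy, hcua, hcb⟩
  by_cases hcub : c s(u, x) = b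
  · exact .inl ⟨v, hv, u, hu, x, hx, huv.symm, hux, by rwa [Sym2.eq_swap], hcub⟩
  exact .inr ⟨{u, v, x, y}, by simp [insert_subset_iff, *], card_le_four,
    ⟨u, by simp, v, by simp, huv, hca⟩, ⟨x, by simp, y, by simp, hxy, hcb⟩,
    _, hcua, hcub, ⟨u, by simp, x, by simp, hux, rfl⟩⟩

lemma hasMonoMatchingIn_of_two_colours {a b : κ} {m : ℕ}
    (hV : ∀ x ∈ V, ∀ y ∈ V, x ≠ y → c s(x, y) = a ∨ c s(x, y) = b) (hm : 3 * m ≤ #V + 1) :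
    HasMonoMatchingIn c V a m ∨ HasMonoMatchingIn c V b m := by
  induction m generalizing V with
  | zero => exact .inl .zero
  | succ m ih =>
    by_cases ha : SpansColour c V a; swap
    · exact .inr <| hasMonoMatchingIn_of_forall_eq (fun x hx y hy hxy =>
        (hV x hx y hy hxy).resolve_left fun h => ha ⟨x, hx, y, hy, hxy, h⟩) (by omega)
    by_cases hb : SpansColour c V b; swap
    · exact .inl <| hasMonoMatchingIn_of_forall_eq (fun x hx y hy hxy =>
        (hV x hx y hy hxy).resolve_right fun h => hb ⟨x, hx, y, hy, hxy, h⟩) (by omega)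
    obtain ⟨p, hp, q, hq, s, hs, hpq, hqs, hca, hcb⟩ | ⟨T, hTV, -, -, -, j, hja, hjb, hj⟩ :=
      exists_path_or_third_colour ha hb
    · have hT : {p, q, s} ⊆ V := by simp [insert_subset_iff, hp, hq, hs]
      have hrest := ih (V := V \ {p, q, s})
        (fun x hx y hy => hV x (sdiff_subset hx) y (sdiff_subset hy))
        (by have := le_card_sdiff {p, q, s} V; have : #{p, q, s} ≤ 3 := card_le_three; omega)
      exact hrest.imp (.succ hT ⟨p, by simp, q, by simp, hpq, hca⟩)
        (.succ hT ⟨q, by simp, s, by simp, hqs, hcb⟩)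
    · obtain ⟨x, hx, y, hy, hxy, hc⟩ := hj
      exact ((hV x (hTV hx) y (hTV hy) hxy).elim (hja <| hc.symm.trans ·)
        (hjb <| hc.symm.trans ·)).elim

end UpperBound

section ThreeColours

variable {c : Sym2 (Fin n) → Fin 3} {V : Finset (Fin n)}

lemma exists_card_le_four_spansColour (hV : ∀ i, SpansColour c V i) :
    ∃ T ⊆ V, #T ≤ 4 ∧ ∀ i, SpansColour c T i := by
  obtain ⟨p, hp, q, hq, s, hs, hpq, hqs, hc0, hc1⟩ | ⟨T, hTV, hT, h0, h1, j, hj0, hj1, hj⟩ :=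
    exists_path_or_third_colour (hV 0) (hV 1)
  · obtain ⟨w, hw, z, hz, hwq, hwz, hc2⟩ : ∃ w ∈ V, ∃ z ∈ V, w ≠ q ∧ w ≠ z ∧ c s(w, z) = 2 := by
      obtain ⟨w, hw, z, hz, hwz, hc2⟩ := hV 2
      by_cases hwq : w = q
      · exact ⟨z, hz, w, hw, hwq ▸ hwz.symm, hwz.symm, by rwa [Sym2.eq_swap]⟩
      · exact ⟨w, hw, z, hz, hwq, hwz, hc2⟩
    -- the colour of `qw` decides which four of `p, q, s, w, z` to keep
    rcases (by decide : ∀ i : Fin 3, i = 0 ∨ i = 1 ∨ i = 2) (c s(q, w)) with hqw | hqw | hqw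
    · refine ⟨{q, s, w, z}, by simp [insert_subset_iff, *], card_le_four, fun i => ?_⟩
      fin_cases i
      exacts [⟨q, by simp, w, by simp, hwq.symm, hqw⟩, ⟨q, by simp, s, by simp, hqs, hc1⟩,
        ⟨w, by simp, z, by simp, hwz, hc2⟩]
    · refine ⟨{p, q, w, z}, by simp [insert_subset_iff, *], card_le_four, fun i => ?_⟩
      fin_cases i
      exacts [⟨p, by simp, q, by simp, hpq, hc0⟩, ⟨q, by simp, w, by simp, hwq.symm, hqw⟩,
        ⟨w, by simp, z, by simp, hwz, hc2⟩]
    · refine ⟨{p, q, s, w}, by simp [insert_subset_iff, *], card_le_four, fun i => ?_⟩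
      fin_cases i
      exacts [⟨p, by simp, q, by simp, hpq, hc0⟩, ⟨q, by simp, s, by simp, hqs, hc1⟩,
        ⟨q, by simp, w, by simp, hwq.symm, hqw⟩]
  · obtain rfl : j = 2 := by omega
    refine ⟨T, hTV, hT, fun i => ?_⟩
    fin_cases i <;> assumption

lemma exists_hasMonoMatchingIn_of_three_colours {m : ℕ} (hm : 4 * m ≤ #V + 2) :
    ∃ i, HasMonoMatchingIn c V i m := by
  induction m generalizing V with
  | zero => exact ⟨0, .zero⟩
  | succ m ih =>
    by_cases hV : ∀ i, SpansColour c V i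
    · obtain ⟨T, hTV, hT, hTc⟩ := exists_card_le_four_spansColour hV
      obtain ⟨i, hi⟩ := ih (V := V \ T) (by have := le_card_sdiff T V; omega)
      exact ⟨i, hi.succ hTV (hTc i)⟩
    · obtain ⟨k, hk⟩ := not_forall.1 hV
      have hother : ∀ x ∈ V, ∀ y ∈ V, x ≠ y → c s(x, y) = k + 1 ∨ c s(x, y) = k + 2 :=
        fun x hx y hy hxy => (by decide : ∀ j l : Fin 3, j ≠ l → j = l + 1 ∨ j = l + 2) _ _
          fun h => hk ⟨x, hx, y, hy, hxy, h⟩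
      exact (hasMonoMatchingIn_of_two_colours hother (by omega)).elim (⟨_, ·⟩) (⟨_, ·⟩)

end ThreeColours

section LowerBound

variable [LinearOrder κ] {lab : Fin n → κ} {M : Finset (Sym2 (Fin n))} {i : κ}

lemma IsMatchingIn.card_le_of_sup_map_eq (hM : IsMatchingIn M)
    (hc : ∀ e ∈ M, (e.map lab).sup = i) : #M ≤ #{v | lab v = i} := by
  refine hM.card_le_of_forall_exists_mem_s10 fun e he => ?_
  induction e using Sym2.ind with
  | _ x y =>
    have := hc _ he
    rw [Sym2.map_mk, Sym2.sup_mk] at this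
    rcases max_choice (lab x) (lab y) with h | h
    · exact ⟨x, mem_filter.2 ⟨mem_univ _, h.symm.trans this⟩, Sym2.mem_mk_left x y⟩
    · exact ⟨y, mem_filter.2 ⟨mem_univ _, h.symm.trans this⟩, Sym2.mem_mk_right x y⟩

lemma IsMatchingIn.two_mul_card_le_of_sup_map_eq_of_isBot (hM : IsMatchingIn M) (hi : IsBot i)
    (hc : ∀ e ∈ M, (e.map lab).sup = i) : 2 * #M ≤ #{v | lab v = i} := by
  refine hM.two_mul_card_le_s10 fun e he => ?_
  induction e using Sym2.ind with
  | _ x y =>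
    have := hc _ he
    rw [Sym2.map_mk, Sym2.sup_mk] at this
    intro v hv
    rcases Sym2.mem_iff.1 hv with rfl | rfl
    · simpa using le_antisymm (this ▸ le_max_left _ _) (hi _)
    · simpa using le_antisymm (this ▸ le_max_right _ _) (hi _)

end LowerBound

lemma card_filter_le_of_val_mem_Ico {N a b : ℕ} {p : Fin N → Prop} [DecidablePred p]
    (h : ∀ v, p v → v.val ∈ Ico a b) : #{v | p v} ≤ b - a :=
  calc #{v | p v} ≤ #(Ico a b) :=
        card_le_card_of_injOn Fin.val (fun v hv => h v (mem_filter.1 hv).2) Fin.val_injective.injOn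
    _ = b - a := Nat.card_Ico a b

def blockLabel {N : ℕ} (a b : ℕ) (v : Fin N) : Fin 3 :=
  if v.val < a then 0 else if v.val < b then 1 else 2

lemma not_coloringHasMatching_blockLabel {r : ℕ} (hr : 1 ≤ r) :
    ¬ ColoringHasMatching (4 * r - 3) 3 (fun _ => r)
      (fun e => (e.map (blockLabel (2 * r - 1) (3 * r - 2))).sup) := by
  rintro ⟨i, M, hcard, hM, hc⟩
  have hclass (j : Fin 3) (a b : ℕ)
      (h : ∀ v : Fin (4 * r - 3), blockLabel (2 * r - 1) (3 * r - 2) v = j → v.val ∈ Ico a b) :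
      #{v | blockLabel (2 * r - 1) (3 * r - 2) v = j} ≤ b - a :=
    card_filter_le_of_val_mem_Ico h
  replace hcard : #M = r := hcard
  rcases (by decide : ∀ i : Fin 3, i = 0 ∨ i = 1 ∨ i = 2) i with rfl | rfl | rfl
  · have := hM.two_mul_card_le_of_sup_map_eq_of_isBot (fun j => Fin.zero_le j) hc
    have := hclass 0 0 (2 * r - 1) fun v hv => by
      unfold blockLabel at hv; split_ifs at hv <;> simp_all
    omega
  · have := hM.card_le_of_sup_map_eq hc
    have := hclass 1 (2 * r - 1) (3 * r - 2) fun v hv => by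
      unfold blockLabel at hv; split_ifs at hv <;> simp_all
    omega
  · have := hM.card_le_of_sup_map_eq hc
    have := hclass 2 (3 * r - 2) (4 * r - 3) fun v hv => by
      unfold blockLabel at hv; split_ifs at hv <;> simp_all
    omega

/-- For `r ≥ 1`, the 3-colour Ramsey number of `rK₂` equals `4r − 2`. -/
theorem ramsey_three_colour_matching (r : ℕ) (hr : 1 ≤ r) :
    (∀ c : Sym2 (Fin (4 * r - 2)) → Fin 3,
        ColoringHasMatching (4 * r - 2) 3 (fun _ => r) c) ∧
      (∃ c : Sym2 (Fin (4 * r - 3)) → Fin 3,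
        ¬ ColoringHasMatching (4 * r - 3) 3 (fun _ => r) c) := by
  refine ⟨fun c => ?_, ⟨_, not_coloringHasMatching_blockLabel hr⟩⟩
  obtain ⟨i, M, hcard, hM, -, hc⟩ :=
    exists_hasMonoMatchingIn_of_three_colours (c := c) (V := univ) (m := r)
      (by rw [card_univ, Fintype.card_fin]; omega)
  exact ⟨i, M, hcard, hM, hc⟩
end
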